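/- Injectivity of the transformation in the angle (injection part of Theorem 1): let T > 0 and let f : AddCircle T → ℂ be integrable with c₁(f) ≠ 0. If φₐ, φ_b : ℝ satisfy 𝒯(f, φₐ)(x) = 𝒯(f, φ_b)(x) for all x : AddCircle T, then ↑φₐ = ↑φ_b in Real.Angle; i.e., distinct angles modulo 2π produce distinct transformed signals. -/

import Mathlib

open MeasureTheory

/-- `theta T f φ` is the representative in `[0, 2π)` of `arg (c₁ f) − φ` modulo `2π`. -/
noncomputable def theta (T : ℝ) [Fact (0 < T)] (f : AddCircle T → ℂ) (φ : ℝ) : ℝ :=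
  toIcoMod Real.two_pi_pos 0 (Complex.arg (fourierCoeff f 1) - φ)

/-- The computed time-shift amount `Δφ(f, φ)`. -/
noncomputable def deltaPhi (T : ℝ) [Fact (0 < T)] (f : AddCircle T → ℂ) (φ : ℝ) : ℝ :=
  if theta T f φ > Real.pi then (theta T f φ - 2 * Real.pi) * T / (2 * Real.pi)
  else theta T f φ * T / (2 * Real.pi)

/-- The transformation `𝒯(f, φ)`: circularly shift `f` by `Δφ(f, φ)`. -/
noncomputable def transf (T : ℝ) [Fact (0 < T)] (f : AddCircle T → ℂ) (φ : ℝ) :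
    AddCircle T → ℂ :=
  fun x => f (x - (deltaPhi T f φ : AddCircle T))

/-! Shifting `f` by `s` multiplies `c₁(f)` by `e^{-2πis/T}`, so when `c₁(f) ≠ 0` the shifted signal
determines `s` modulo `T`. Modulo `T`, the shift `Δφ(f, φ)` is `(arg c₁(f) − φ) · T / 2π`, which
determines `φ` modulo `2π`. -/

open AddCircle

theorem fourierCoeff_comp_sub {T : ℝ} [Fact (0 < T)] (f : AddCircle T → ℂ) (s : AddCircle T)
    (n : ℤ) : fourierCoeff (fun x => f (x - s)) n = fourier (-n) s * fourierCoeff f n := by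
  rw [fourierCoeff, fourierCoeff, ← integral_add_right_eq_self _ s, ← integral_const_mul]
  congr 1 with x
  simp only [add_sub_cancel_right, smul_eq_mul, fourier_apply, smul_add, toCircle_add,
    Circle.coe_mul]
  ring

theorem eq_of_comp_sub_eq_of_fourierCoeff_ne_zero {T : ℝ} [hT : Fact (0 < T)]
    {f : AddCircle T → ℂ} (hf : fourierCoeff f 1 ≠ 0) {s t : AddCircle T}
    (h : (fun x => f (x - s)) = fun x => f (x - t)) : s = t := by
  have hcoeff := congrArg (fourierCoeff · 1) h
  simp only [fourierCoeff_comp_sub, mul_left_inj' hf, fourier_neg, fourier_one,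
    (starRingEnd ℂ).injective.eq_iff, Circle.coe_inj] at hcoeff
  exact injective_toCircle hT.out.ne' hcoeff

theorem coe_theta (T : ℝ) [Fact (0 < T)] (f : AddCircle T → ℂ) (φ : ℝ) :
    ((theta T f φ : ℝ) : AddCircle (2 * Real.pi)) = ↑(Complex.arg (fourierCoeff f 1) - φ) :=
  Real.Angle.coe_toIcoMod _ _

theorem coe_deltaPhi (T : ℝ) [hT : Fact (0 < T)] (f : AddCircle T → ℂ) (φ : ℝ) :
    (deltaPhi T f φ : AddCircle T) =
      equivAddCircle (2 * Real.pi) T Real.two_pi_pos.ne' hT.out.ne' (theta T f φ : ℝ) := by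
  have hπ := Real.pi_ne_zero
  rw [equivAddCircle_apply_mk, deltaPhi]
  split_ifs
  · rw [show (theta T f φ - 2 * Real.pi) * T / (2 * Real.pi)
        = theta T f φ * ((2 * Real.pi)⁻¹ * T) - T by field_simp, coe_sub, coe_period, sub_zero]
  · congr 1
    field_simp

theorem transf_injective_angle_general (T : ℝ) [Fact (0 < T)] (f : AddCircle T → ℂ)
    (hc : fourierCoeff f 1 ≠ 0)
    (φₐ φb : ℝ) (h : ∀ x : AddCircle T, transf T f φₐ x = transf T f φb x) :
    (↑φₐ : Real.Angle) = ↑φb := by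
  have hΔ : (deltaPhi T f φₐ : AddCircle T) = deltaPhi T f φb :=
    eq_of_comp_sub_eq_of_fourierCoeff_ne_zero hc (funext h)
  rw [coe_deltaPhi, coe_deltaPhi, EmbeddingLike.apply_eq_iff_eq, coe_theta, coe_theta,
    coe_sub, coe_sub, sub_right_inj] at hΔ
  exact hΔ

/-- Injectivity of the transformation in the angle: distinct angles modulo `2π` produce
distinct transformed signals. -/
theorem transf_injective_angle (T : ℝ) [Fact (0 < T)] (f : AddCircle T → ℂ)
    (hf : Integrable f AddCircle.haarAddCircle) (hc : fourierCoeff f 1 ≠ 0)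
    (φₐ φb : ℝ) (h : ∀ x : AddCircle T, transf T f φₐ x = transf T f φb x) :
    (↑φₐ : Real.Angle) = ↑φb :=
  transf_injective_angle_general T f hc φₐ φb h
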